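/- Let U be a unitary four-site gate, L even, t ≥ 1, and x, y lattice sites such that x ∉ LC. Then for all a, b : Matrix (Fin d) (Fin d) ℂ, d^{−L²} · Tr(a_x * 𝕌^{−t} * b_y * 𝕌^t) = (1/d²) · Tr(a) · Tr(b); in particular this dynamic correlation vanishes whenever a or b is traceless. -/

import Mathlib

/-!
Call `M` supported on a set `S` of sites if it is `A ⊗ 1` for the splitting of the legs into
`S` and its complement. Conjugating such an operator by a unitary gate on a plaquette `P`
leaves it supported on `S` if `P` misses `S` (the gate commutes with it and cancels), and on
`S ∪ P` otherwise. The plaquettes of a brickwork layer are pairwise disjoint and have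
diameter `1`, so a layer enlarges a support by at most distance `1` and one step `𝕌` by at
most `2`. The odd layer acts first, and the plaquette of `msite y` is one of its own, so
`𝕌^{-t} b_y 𝕌^t` is supported on the `(2t-1)`-neighbourhood of that plaquette, which is `LC`.

For `C` supported away from `x`, the diagonal `C f f` does not depend on the leg `f x`, so
`d · Tr (a_x C) = Tr a · Tr C`. With `C = 𝕌^{-t} b_y 𝕌^t` we have `Tr C = Tr b_y`, and the
same identity with `C = 1` gives `d · Tr b_y = d^{L²} · Tr b`.
-/

open Matrix

/-- A matrix is unitary if it is inverted by its conjugate transpose on both sides. -/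
def IsUnitary {n : Type*} [Fintype n] [DecidableEq n] (M : Matrix n n ℂ) : Prop :=
  M * Mᴴ = 1 ∧ Mᴴ * M = 1

/-- Index type of a four-site gate, legs ordered by the plaquette sites
`(0,0), (1,0), (0,1), (1,1)`. -/
abbrev FourIdx (d : ℕ) := Fin d × Fin d × Fin d × Fin d

/-- Lattice sites of the `L × L` torus. -/
abbrev Site (L : ℕ) := ZMod L × ZMod L

/-- Index type of global operators: one `Fin d` leg per lattice site. -/
abbrev GlobalIdx (d L : ℕ) := Site L → Fin d

/-- The global operator `U_{p(x)}`, acting as the four-site gate `U` on the legs at the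
plaquette sites `x, x+(1,0), x+(0,1), x+(1,1)` (in this order) and as the identity elsewhere. -/
noncomputable def plaqOp {d L : ℕ} [NeZero L] (U : Matrix (FourIdx d) (FourIdx d) ℂ)
    (x : Site L) : Matrix (GlobalIdx d L) (GlobalIdx d L) ℂ :=
  Matrix.of fun f g =>
    if ∀ u : Site L, u ≠ x → u ≠ x + (1, 0) → u ≠ x + (0, 1) → u ≠ x + (1, 1) → f u = g u then
      U (f x, f (x + (1, 0)), f (x + (0, 1)), f (x + (1, 1)))
        (g x, g (x + (1, 0)), g (x + (0, 1)), g (x + (1, 1)))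
    else 0

/-- The even layer `𝕌_ee`: product of the mutually commuting gates `U_{p(2i,2j)}`. -/
noncomputable def Uee (d L : ℕ) [NeZero L] (U : Matrix (FourIdx d) (FourIdx d) ℂ) :
    Matrix (GlobalIdx d L) (GlobalIdx d L) ℂ :=
  (((List.range (L / 2)).flatMap fun i => (List.range (L / 2)).map fun j =>
      plaqOp U (((2 * i : ℕ) : ZMod L), ((2 * j : ℕ) : ZMod L)))).prod

/-- The odd layer `𝕌_oo`: product of the mutually commuting gates `U_{p(2i+1,2j+1)}`. -/
noncomputable def Uoo (d L : ℕ) [NeZero L] (U : Matrix (FourIdx d) (FourIdx d) ℂ) :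
    Matrix (GlobalIdx d L) (GlobalIdx d L) ℂ :=
  (((List.range (L / 2)).flatMap fun i => (List.range (L / 2)).map fun j =>
      plaqOp U (((2 * i + 1 : ℕ) : ZMod L), ((2 * j + 1 : ℕ) : ZMod L)))).prod

/-- One discrete time step `𝕌 = 𝕌_oo ⬝ 𝕌_ee`. -/
noncomputable def Ustep (d L : ℕ) [NeZero L] (U : Matrix (FourIdx d) (FourIdx d) ℂ) :
    Matrix (GlobalIdx d L) (GlobalIdx d L) ℂ :=
  Uoo d L U * Uee d L U

/-- The global operator acting as the `d × d` matrix `a` on leg `x` and as the identity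
elsewhere. -/
noncomputable def siteOpG {d L : ℕ} [NeZero L] (a : Matrix (Fin d) (Fin d) ℂ) (x : Site L) :
    Matrix (GlobalIdx d L) (GlobalIdx d L) ℂ :=
  Matrix.of fun f g =>
    (if ∀ u : Site L, u ≠ x → f u = g u then 1 else 0) * a (f x) (g x)

/-- Circular distance in `ZMod L`. -/
def cdist {L : ℕ} [NeZero L] (a b : ZMod L) : ℕ := min (a - b).val (b - a).val

/-- Torus ℓ∞-distance of two lattice sites. -/
def torusDist {L : ℕ} [NeZero L] (u v : Site L) : ℕ :=
  max (cdist u.1 v.1) (cdist u.2 v.2)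

/-- The anchor site `m` of the plaquette containing `y`: with `ŷ ∈ {0,…,L−1}²` the
representative of `y`, `m_k = ŷ_k` if `ŷ_k` is odd and `m_k = ŷ_k − 1` if `ŷ_k` is even. -/
def msite {L : ℕ} [NeZero L] (y : Site L) : Site L :=
  ((if Odd y.1.val then y.1 else y.1 - 1), (if Odd y.2.val then y.2 else y.2 - 1))

/-- The base of the light cone of `y` for time `t`: all sites within torus ℓ∞-distance
`2t − 1` of some site of the plaquette anchored at `msite y`. -/
def LCfin {L : ℕ} [NeZero L] (y : Site L) (t : ℕ) : Finset (Site L) :=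
  Finset.univ.filter fun z =>
    ∃ w ∈ ({msite y, msite y + (1, 0), msite y + (0, 1), msite y + (1, 1)} : Finset (Site L)),
      torusDist w z ≤ 2 * t - 1

open Set Function

section Support

variable {ι α R : Type*}

/-- `M = A ⊗ 1` for the splitting of the legs into those in `S` and those outside `S`. -/
def SupportedOn [Zero R] (S : Set ι) (M : Matrix (ι → α) (ι → α) R) : Prop :=
  (∀ f g, ¬EqOn f g Sᶜ → M f g = 0) ∧
    ∀ f g f' g', EqOn f g Sᶜ → EqOn f' g' Sᶜ → EqOn f f' S → EqOn g g' S →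
      M f g = M f' g'

namespace SupportedOn

variable {S T : Set ι} {M N : Matrix (ι → α) (ι → α) R}

theorem mono [Zero R] (hM : SupportedOn S M) (hST : S ⊆ T) : SupportedOn T M := by
  have hc : Tᶜ ⊆ Sᶜ := compl_subset_compl.mpr hST
  refine ⟨fun f g hfg => hM.1 f g fun h => hfg (h.mono hc),
    fun f g f' g' hfg hfg' hff hgg => ?_⟩
  by_cases hS : EqOn f g Sᶜ
  · refine hM.2 f g f' g' hS (fun u hu => ?_) (hff.mono hST) (hgg.mono hST)
    by_cases huT : u ∈ T
    · rw [← hff huT, ← hgg huT, hS hu]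
    · exact hfg' huT
  · have hS' : ¬EqOn f' g' Sᶜ := fun h' => hS fun u hu => by
      by_cases huT : u ∈ T
      · rw [hff huT, hgg huT, h' hu]
      · exact hfg huT
    rw [hM.1 f g hS, hM.1 f' g' hS']

theorem conjTranspose [AddMonoid R] [StarAddMonoid R] (hM : SupportedOn S M) :
    SupportedOn S Mᴴ := by
  refine ⟨fun f g hfg => ?_, fun f g f' g' hfg hfg' hff hgg => ?_⟩
  · rw [Matrix.conjTranspose_apply, hM.1 g f fun h => hfg h.symm, star_zero]
  · rw [Matrix.conjTranspose_apply, Matrix.conjTranspose_apply,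
      hM.2 g f g' f' hfg.symm hfg'.symm hgg hff]

variable [Fintype ι] [DecidableEq ι] [Fintype α] [CommSemiring R]

theorem mul [DecidableEq α] (hM : SupportedOn S M) (hN : SupportedOn S N) :
    SupportedOn S (M * N) := by
  classical
  refine ⟨fun f g hfg => Finset.sum_eq_zero fun k _ => ?_,
    fun f g f' g' hfg hfg' hff hgg => ?_⟩
  · show M f k * N k g = 0
    by_cases hfk : EqOn f k Sᶜ
    · rw [hN.1 k g fun hkg => hfg (hfk.trans hkg), mul_zero]
    · rw [hM.1 f k hfk, zero_mul]
  -- Off `S` the summation variable must follow `f`; this permutation makes it follow `f'`.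
  let τ : Equiv.Perm (ι → α) :=
    Equiv.piCongrRight fun u => if u ∈ S then Equiv.refl α else Equiv.swap (f u) (f' u)
  have hτS : ∀ k, EqOn k (τ k) S := fun k u hu => by simp [τ, hu]
  have hτ : ∀ k, EqOn f k Sᶜ ↔ EqOn f' (τ k) Sᶜ := fun k => by
    refine forall₂_congr fun u (hu : u ∉ S) => ?_
    simp only [τ, Equiv.piCongrRight_apply, Pi.map_apply, if_neg hu]
    rw [eq_comm (a := f' u), Equiv.swap_apply_eq_iff, Equiv.swap_apply_right, eq_comm]
  rw [Matrix.mul_apply, Matrix.mul_apply, ← Equiv.sum_comp τ (fun k => M f' k * N k g')]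
  refine Finset.sum_congr rfl fun k _ => ?_
  by_cases hfk : EqOn f k Sᶜ
  · rw [hM.2 f k f' (τ k) hfk ((hτ k).mp hfk) hff (hτS k),
      hN.2 k g (τ k) g' (hfk.symm.trans hfg) (((hτ k).mp hfk).symm.trans hfg') (hτS k) hgg]
  · rw [hM.1 f k hfk, hM.1 f' (τ k) fun h => hfk ((hτ k).mpr h), zero_mul, zero_mul]

theorem mul_apply_of_disjoint (hST : Disjoint S T) (hM : SupportedOn S M)
    (hN : SupportedOn T N) {f g k : ι → α} (hkS : EqOn k g S) (hkS' : EqOn k f Sᶜ) :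
    (M * N) f g = M f k * N k g := by
  refine (Matrix.mul_apply).trans (Finset.sum_eq_single k (fun k' _ hk' => ?_) (by simp))
  by_cases hfk : EqOn f k' Sᶜ
  · refine mul_eq_zero_of_right _ (hN.1 k' g fun hkg => hk' (funext fun u => ?_))
    by_cases hu : u ∈ S
    · rw [hkS hu, hkg (hST.subset_compl_right hu)]
    · rw [hkS' hu, hfk hu]
  · rw [hM.1 f k' hfk, zero_mul]

theorem commute_of_disjoint (hST : Disjoint S T) (hM : SupportedOn S M)
    (hN : SupportedOn T N) : M * N = N * M := by
  classical
  ext f g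
  have hTS : ∀ u ∈ T, u ∉ S := fun _ hu => hST.subset_compl_left hu
  rw [mul_apply_of_disjoint hST hM hN (k := S.piecewise g f)
      (fun _ hu => piecewise_eq_of_mem _ _ _ hu) (fun _ hu => piecewise_eq_of_notMem _ _ _ hu),
    mul_apply_of_disjoint hST.symm hN hM (k := T.piecewise g f)
      (fun _ hu => piecewise_eq_of_mem _ _ _ hu) (fun _ hu => piecewise_eq_of_notMem _ _ _ hu)]
  by_cases hfg : EqOn f g (S ∪ T)ᶜ
  · rw [mul_comm, hM.2 f (S.piecewise g f) (T.piecewise g f) g, hN.2 (S.piecewise g f) g f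
      (T.piecewise g f)] <;> intro u hu <;> by_cases hu' : u ∈ S <;> by_cases hu'' : u ∈ T <;>
      simp_all [EqOn]
  · obtain ⟨u, huS, huT, hne⟩ : ∃ u ∉ S, u ∉ T ∧ f u ≠ g u := by
      simpa [EqOn, not_forall] using hfg
    rw [hN.1 _ g fun h => hne (by simpa [huS] using h huT),
      hM.1 _ g fun h => hne (by simpa [huT] using h huS), mul_zero, mul_zero]

end SupportedOn

theorem supportedOn_one [Fintype ι] [DecidableEq α] [Zero R] [One R] (S : Set ι) :
    SupportedOn S (1 : Matrix (ι → α) (ι → α) R) := by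
  refine ⟨fun f g hfg => Matrix.one_apply_ne fun h => hfg (h ▸ eqOn_refl f _),
    fun f g f' g' hfg hfg' hff hgg => ?_⟩
  have key : f = g ↔ f' = g' := by
    simp only [funext_iff]
    refine ⟨fun h u => ?_, fun h u => ?_⟩ <;> by_cases hu : u ∈ S
    · rw [← hff hu, ← hgg hu, h]
    · exact hfg' hu
    · rw [hff hu, hgg hu, h]
    · exact hfg hu
  simp only [Matrix.one_apply, key]

end Support

section GateLayers

variable {ι α β R : Type*} [Fintype ι] [DecidableEq ι] [Fintype α] [DecidableEq α]
  [CommSemiring R] [StarRing R] {l : List β} {P : β → Set ι}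
  {G : β → Matrix (ι → α) (ι → α) R} {S T : Set ι} {B : Matrix (ι → α) (ι → α) R}

theorem SupportedOn.conj_list_prod (hB : SupportedOn T B)
    (hG : ∀ w ∈ l, SupportedOn (P w) (G w)) (hU : ∀ w ∈ l, G w ∈ unitary _)
    (hT : ∀ w ∈ l, ¬Disjoint (P w) T → P w ⊆ T) :
    SupportedOn T ((l.map G).prod ᴴ * B * (l.map G).prod) := by
  induction l generalizing B with
  | nil => simpa using hB
  | cons w l ih =>
    have hGw := hG w List.mem_cons_self
    have hw : SupportedOn T ((G w)ᴴ * B * G w) := by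
      by_cases hd : Disjoint (P w) T
      · rw [hGw.conjTranspose.commute_of_disjoint hd hB, Matrix.mul_assoc,
          ← Matrix.star_eq_conjTranspose, Unitary.star_mul_self_of_mem (hU w List.mem_cons_self),
          Matrix.mul_one]
        exact hB
      · have hGT := hGw.mono (hT w List.mem_cons_self hd)
        exact (hGT.conjTranspose.mul hB).mul hGT
    simpa [Matrix.conjTranspose_mul, Matrix.mul_assoc] using
      ih hw (fun v hv => hG v (List.mem_cons_of_mem w hv))
        (fun v hv => hU v (List.mem_cons_of_mem w hv))
        (fun v hv => hT v (List.mem_cons_of_mem w hv))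

theorem SupportedOn.conj_list_prod_of_pairwise (hB : SupportedOn S B)
    (hG : ∀ w ∈ l, SupportedOn (P w) (G w)) (hU : ∀ w ∈ l, G w ∈ unitary _)
    (hl : ∀ w ∈ l, ∀ w' ∈ l, ¬Disjoint (P w) (P w') → P w = P w') :
    SupportedOn (S ∪ ⋃ (w ∈ l) (_ : ¬Disjoint (P w) S), P w)
      ((l.map G).prod ᴴ * B * (l.map G).prod) := by
  have hsub : ∀ w ∈ l, ¬Disjoint (P w) S →
      P w ⊆ S ∪ ⋃ (w ∈ l) (_ : ¬Disjoint (P w) S), P w := fun w hw hwS z hz => by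
      simp only [mem_union, mem_iUnion]
      exact Or.inr ⟨w, hw, hwS, hz⟩
  refine (hB.mono subset_union_left).conj_list_prod hG hU fun w hw hwT => ?_
  by_cases hwS : Disjoint (P w) S
  · simp only [Set.disjoint_union_right, hwS, true_and, Set.disjoint_iUnion_right,
      not_forall] at hwT
    obtain ⟨w', hw', hw'S, hww'⟩ := hwT
    exact hl w hw w' hw' hww' ▸ hsub w' hw' hw'S
  · exact hsub w hw hwS

end GateLayers

section Fiberwise

variable {X β R : Type*} [Semiring R]

open Classical in
/-- If `π` identifies each class of `r` with `β`, this is `1 ⊗ A`. -/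
noncomputable def fiberwiseOp (r : X → X → Prop) (π : X → β) (A : Matrix β β R) :
    Matrix X X R :=
  Matrix.of fun f g => if r f g then A (π f) (π g) else 0

variable {r : X → X → Prop} {π : X → β}

theorem fiberwiseOp_mul [Fintype X] [Fintype β] (hr : Equivalence r)
    (hπ : ∀ f, BijOn π {g | r f g} univ) (A B : Matrix β β R) :
    fiberwiseOp r π (A * B) = fiberwiseOp r π A * fiberwiseOp r π B := by
  classical
  ext f g
  simp only [fiberwiseOp, Matrix.mul_apply, Matrix.of_apply]
  by_cases hfg : r f g
  · have hterm : ∀ h,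
        (if r f h then A (π f) (π h) else 0) * (if r h g then B (π h) (π g) else 0) =
          if r f h then A (π f) (π h) * B (π h) (π g) else 0 := fun h => by
      by_cases hfh : r f h
      · rw [if_pos hfh, if_pos hfh, if_pos (hr.trans (hr.symm hfh) hfg)]
      · rw [if_neg hfh, if_neg hfh, zero_mul]
    rw [if_pos hfg, Finset.sum_congr rfl fun h _ => hterm h, ← Finset.sum_filter]
    refine (Finset.sum_nbij π (fun _ _ => Finset.mem_univ _) ?_ ?_ fun _ _ => rfl).symm
    · simpa using (hπ f).injOn
    · simpa using (hπ f).surjOn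
  · rw [if_neg hfg]
    refine (Finset.sum_eq_zero fun h _ => ?_).symm
    by_cases hfh : r f h
    · rw [if_neg fun hhg => hfg (hr.trans hfh hhg), mul_zero]
    · rw [if_neg hfh, zero_mul]

theorem fiberwiseOp_one [DecidableEq X] [DecidableEq β] (hr : ∀ f, r f f)
    (hπ : ∀ f, InjOn π {g | r f g}) :
    fiberwiseOp r π (1 : Matrix β β R) = 1 := by
  classical
  ext f g
  simp only [fiberwiseOp, Matrix.of_apply, Matrix.one_apply]
  by_cases hfg : f = g
  · simp [hfg, hr g]
  · rw [if_neg hfg, ite_eq_right_iff, ite_eq_right_iff]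
    exact fun hr' hπ' => absurd (hπ f (hr f) hr' hπ') hfg

theorem conjTranspose_fiberwiseOp [StarRing R] (hr : ∀ f g, r f g → r g f)
    (A : Matrix β β R) :
    (fiberwiseOp r π A)ᴴ = fiberwiseOp r π Aᴴ := by
  classical
  ext f g
  simp only [fiberwiseOp, Matrix.conjTranspose_apply, Matrix.of_apply,
    (show r g f ↔ r f g from ⟨hr g f, hr f g⟩)]
  split_ifs <;> simp

theorem fiberwiseOp_mem_unitary [Fintype X] [DecidableEq X] [Fintype β] [DecidableEq β]
    [StarRing R] (hr : Equivalence r) (hπ : ∀ f, BijOn π {g | r f g} univ)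
    {A : Matrix β β R} (hA : A ∈ unitary _) : fiberwiseOp r π A ∈ unitary _ := by
  simp only [Unitary.mem_iff, Matrix.star_eq_conjTranspose] at hA ⊢
  simp only [conjTranspose_fiberwiseOp fun _ _ => hr.symm, ← fiberwiseOp_mul hr hπ, hA,
    fiberwiseOp_one hr.refl fun f => (hπ f).injOn, and_self]

theorem supportedOn_fiberwiseOp {ι α β R : Type*} [Semiring R] {S : Set ι}
    {π : (ι → α) → β} (hπ : ∀ f g, EqOn f g S → π f = π g) (A : Matrix β β R) :
    SupportedOn S (fiberwiseOp (fun f g => EqOn f g Sᶜ) π A) :=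
  ⟨fun f g hfg => by simp [fiberwiseOp, hfg], fun f g f' g' hfg hfg' hff hgg => by
    simp [fiberwiseOp, hfg, hfg', hπ f f' hff, hπ g g' hgg]⟩

end Fiberwise

theorem card_mul_sum_apply_mul_eq_sum_mul_sum {ι α R : Type*} [Fintype ι] [DecidableEq ι]
    [Fintype α] [CommSemiring R] (x : ι) (φ : α → R) (ψ : (ι → α) → R)
    (hψ : ∀ f v, ψ (update f x v) = ψ f) :
    Fintype.card α * ∑ f, φ (f x) * ψ f = (∑ v, φ v) * ∑ f, ψ f := by
  have hinv : Involutive fun p : α × (ι → α) => (p.2 x, update p.2 x p.1) := fun p => by simp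
  rw [← Finset.card_univ, ← nsmul_eq_mul, ← Finset.sum_const, Finset.sum_mul_sum,
    ← Fintype.sum_prod_type', ← Fintype.sum_prod_type']
  exact Fintype.sum_bijective _ hinv.bijective _ _ fun p => by simp [hψ]

theorem trace_conjTranspose_mul_mul_of_mem_unitary {n R : Type*} [Fintype n] [DecidableEq n]
    [CommSemiring R] [StarRing R] {V : Matrix n n R} (hV : V ∈ unitary _) (B : Matrix n n R) :
    (Vᴴ * B * V).trace = B.trace := by
  rw [Matrix.trace_mul_cycle, ← Matrix.star_eq_conjTranspose, Unitary.mul_star_self_of_mem hV,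
    Matrix.one_mul]

section Torus

variable {L : ℕ}

def plaquette (w : Site L) : Set (Site L) :=
  {w, w + (1, 0), w + (0, 1), w + (1, 1)}

theorem mem_plaquette_iff {w z : Site L} :
    z ∈ plaquette w ↔ (z.1 = w.1 ∨ z.1 = w.1 + 1) ∧ (z.2 = w.2 ∨ z.2 = w.2 + 1) := by
  simp only [plaquette, Set.mem_insert_iff, Set.mem_singleton_iff, Prod.ext_iff, Prod.fst_add,
    Prod.snd_add, add_zero]
  tauto

variable [NeZero L]

theorem cdist_eq_natAbs_valMinAbs (a b : ZMod L) : cdist a b = (a - b).valMinAbs.natAbs := by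
  rw [cdist, ZMod.valMinAbs_natAbs_eq_min, ← neg_sub a b, ZMod.neg_val]
  split_ifs with h <;> simp [h]

theorem cdist_triangle (a b c : ZMod L) : cdist a c ≤ cdist a b + cdist b c := by
  simp only [cdist_eq_natAbs_valMinAbs]
  calc (a - c).valMinAbs.natAbs = ((a - b) + (b - c)).valMinAbs.natAbs := by
        rw [sub_add_sub_cancel]
    _ ≤ ((a - b).valMinAbs + (b - c).valMinAbs).natAbs := ZMod.natAbs_valMinAbs_add_le _ _
    _ ≤ _ := Int.natAbs_add_le _ _

theorem cdist_le_one {a b c : ZMod L} (ha : a = c ∨ a = c + 1) (hb : b = c ∨ b = c + 1) :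
    cdist a b ≤ 1 := by
  have h1 : (1 : ZMod L).valMinAbs.natAbs ≤ 1 := by
    rw [ZMod.valMinAbs_natAbs_eq_min, ZMod.val_one_eq_one_mod]
    exact (min_le_left _ _).trans (Nat.mod_le 1 L)
  rcases ha with rfl | rfl <;> rcases hb with rfl | rfl <;>
    simp [cdist_eq_natAbs_valMinAbs, ZMod.natAbs_valMinAbs_neg, h1]

theorem torusDist_self (u : Site L) : torusDist u u = 0 := by
  simp [torusDist, cdist_eq_natAbs_valMinAbs]

theorem torusDist_triangle (u v w : Site L) : torusDist u w ≤ torusDist u v + torusDist v w :=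
  max_le ((cdist_triangle _ v.1 _).trans (add_le_add (le_max_left _ _) (le_max_left _ _)))
    ((cdist_triangle _ v.2 _).trans (add_le_add (le_max_right _ _) (le_max_right _ _)))

def torusBall (S : Set (Site L)) (r : ℕ) : Set (Site L) :=
  {z | ∃ w ∈ S, torusDist w z ≤ r}

theorem subset_torusBall (S : Set (Site L)) (r : ℕ) : S ⊆ torusBall S r :=
  fun z hz => ⟨z, hz, by simp [torusDist_self]⟩

theorem torusBall_torusBall_subset (S : Set (Site L)) (r s : ℕ) :
    torusBall (torusBall S r) s ⊆ torusBall S (r + s) := by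
  rintro z ⟨w, ⟨v, hv, hvw⟩, hwz⟩
  exact ⟨v, hv, (torusDist_triangle v w z).trans (add_le_add hvw hwz)⟩

theorem torusDist_le_one_of_mem_plaquette {w z z' : Site L} (hz : z ∈ plaquette w)
    (hz' : z' ∈ plaquette w) : torusDist z z' ≤ 1 := by
  rw [mem_plaquette_iff] at hz hz'
  exact max_le (cdist_le_one hz.1 hz'.1) (cdist_le_one hz.2 hz'.2)

theorem coe_LCfin (y : Site L) (t : ℕ) :
    (LCfin y t : Set (Site L)) = torusBall (plaquette (msite y)) (2 * t - 1) := by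
  ext z
  simp [LCfin, torusBall, plaquette]

end Torus

section Layers

variable {L : ℕ}

def layerAnchors (L s : ℕ) : List (Site L) :=
  (List.range (L / 2)).flatMap fun i => (List.range (L / 2)).map fun j =>
    (((2 * i + s : ℕ) : ZMod L), ((2 * j + s : ℕ) : ZMod L))

theorem mem_layerAnchors {s : ℕ} {w : Site L} :
    w ∈ layerAnchors L s ↔
      ∃ i < L / 2, ∃ j < L / 2,
        w = (((2 * i + s : ℕ) : ZMod L), ((2 * j + s : ℕ) : ZMod L)) := by
  simp [layerAnchors, eq_comm]

theorem Uee_eq [NeZero L] (d : ℕ) (U : Matrix (FourIdx d) (FourIdx d) ℂ) :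
    Uee d L U = ((layerAnchors L 0).map (plaqOp U)).prod := by
  simp only [Uee, layerAnchors, List.map_flatMap, List.map_map]
  rfl

theorem Uoo_eq [NeZero L] (d : ℕ) (U : Matrix (FourIdx d) (FourIdx d) ℂ) :
    Uoo d L U = ((layerAnchors L 1).map (plaqOp U)).prod := by
  simp only [Uoo, layerAnchors, List.map_flatMap, List.map_map]
  rfl

theorem val_sub_div_two_eq (hL : Even L) {s i : ℕ} (hi : i < L / 2) {c : ZMod L}
    (hc : c = ((2 * i + s : ℕ) : ZMod L) ∨ c = ((2 * i + s : ℕ) : ZMod L) + 1) :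
    (c - s).val / 2 = i := by
  obtain ⟨K, rfl⟩ := hL
  rcases hc with rfl | rfl
  · rw [show ((2 * i + s : ℕ) : ZMod (K + K)) - s = ((2 * i : ℕ) : ZMod (K + K)) by
      push_cast; ring, ZMod.val_cast_of_lt (by omega)]
    omega
  · rw [show ((2 * i + s : ℕ) : ZMod (K + K)) + 1 - s = ((2 * i + 1 : ℕ) : ZMod (K + K)) by
      push_cast; ring, ZMod.val_cast_of_lt (by omega)]
    omega

theorem eq_of_mem_layerAnchors_of_not_disjoint (hL : Even L) {s : ℕ} {w w' : Site L}
    (hw : w ∈ layerAnchors L s) (hw' : w' ∈ layerAnchors L s)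
    (hww' : ¬Disjoint (plaquette w) (plaquette w')) : w = w' := by
  obtain ⟨i, hi, j, hj, rfl⟩ := mem_layerAnchors.mp hw
  obtain ⟨i', hi', j', hj', rfl⟩ := mem_layerAnchors.mp hw'
  obtain ⟨z, hz, hz'⟩ := Set.not_disjoint_iff.mp hww'
  rw [mem_plaquette_iff] at hz hz'
  rw [← val_sub_div_two_eq hL hi hz.1, ← val_sub_div_two_eq hL hj hz.2,
    ← val_sub_div_two_eq hL hi' hz'.1, ← val_sub_div_two_eq hL hj' hz'.2]

theorem exists_msite_coord_eq [NeZero L] (hL : Even L) (c : ZMod L) :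
    ∃ i < L / 2, (if Odd c.val then c else c - 1) = ((2 * i + 1 : ℕ) : ZMod L) := by
  obtain ⟨m, hm, hcm⟩ : ∃ m : ℕ, Odd m ∧ (if Odd c.val then c else c - 1) = m := by
    split_ifs with h
    · exact ⟨c.val, h, (ZMod.natCast_zmod_val c).symm⟩
    · refine ⟨c.val + (L - 1), (Nat.not_odd_iff_even.mp h).add_odd
        (Nat.Even.sub_odd NeZero.one_le hL odd_one), ?_⟩
      simp [Nat.cast_sub NeZero.one_le, sub_eq_add_neg]
  have hmod : m % L % 2 = 1 := by
    rw [Nat.mod_mod_of_dvd _ (even_iff_two_dvd.mp hL)]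
    exact Nat.odd_iff.mp hm
  have hlt : m % L < L := Nat.mod_lt _ (NeZero.pos L)
  obtain ⟨K, hK⟩ := hL
  refine ⟨m % L / 2, by omega, ?_⟩
  rw [hcm, show 2 * (m % L / 2) + 1 = m % L by omega, ZMod.natCast_mod]

theorem msite_mem_layerAnchors [NeZero L] (hL : Even L) (y : Site L) :
    msite y ∈ layerAnchors L 1 := by
  obtain ⟨i, hi, h1⟩ := exists_msite_coord_eq hL y.1
  obtain ⟨j, hj, h2⟩ := exists_msite_coord_eq hL y.2
  exact mem_layerAnchors.mpr ⟨i, hi, j, hj, by rw [msite, h1, h2]⟩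

theorem mem_plaquette_msite [NeZero L] (y : Site L) : y ∈ plaquette (msite y) := by
  rw [mem_plaquette_iff, msite]
  constructor <;> split_ifs <;> simp

end Layers

section Gates

variable {d L : ℕ}

def plaqLegs (w : Site L) (f : GlobalIdx d L) : FourIdx d :=
  (f w, f (w + (1, 0)), f (w + (0, 1)), f (w + (1, 1)))

theorem bijOn_plaqLegs [Nontrivial (ZMod L)] (w : Site L) (f : GlobalIdx d L) :
    BijOn (plaqLegs w) {g | EqOn f g (plaquette w)ᶜ} univ := by
  refine ⟨fun _ _ => mem_univ _, fun g hg h hh hgh => funext fun u => ?_, fun q _ => ?_⟩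
  · by_cases hu : u ∈ plaquette w
    · simp only [plaqLegs, Prod.mk.injEq] at hgh
      simp only [plaquette, mem_insert_iff, mem_singleton_iff] at hu
      rcases hu with rfl | rfl | rfl | rfl <;> tauto
    · exact (hg hu).symm.trans (hh hu)
  · refine ⟨update (update (update (update f w q.1) (w + (1, 0)) q.2.1) (w + (0, 1)) q.2.2.1)
      (w + (1, 1)) q.2.2.2, fun u hu => ?_, ?_⟩
    · simp only [plaquette, mem_compl_iff, mem_insert_iff, mem_singleton_iff, not_or] at hu
      simp [hu.1, hu.2.1, hu.2.2.1, hu.2.2.2]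
    · simp [plaqLegs, Prod.ext_iff]

variable [NeZero L]

theorem plaqOp_eq_fiberwiseOp (U : Matrix (FourIdx d) (FourIdx d) ℂ) (w : Site L) :
    plaqOp U w = fiberwiseOp (fun f g => EqOn f g (plaquette w)ᶜ) (plaqLegs w) U := by
  ext f g
  simp only [plaqOp, fiberwiseOp, plaqLegs, Matrix.of_apply]
  congr 1
  simp [EqOn, plaquette, not_or]

theorem siteOpG_eq_fiberwiseOp (a : Matrix (Fin d) (Fin d) ℂ) (x : Site L) :
    siteOpG a x = fiberwiseOp (fun f g => EqOn f g {x}ᶜ) (fun f => f x) a := by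
  ext f g
  simp only [siteOpG, fiberwiseOp, Matrix.of_apply, ite_mul, one_mul, zero_mul]
  congr 1

end Gates

section Dynamics

variable {d L : ℕ} [NeZero L] {U : Matrix (FourIdx d) (FourIdx d) ℂ}

theorem plaqOp_mem_unitary [Nontrivial (ZMod L)] (hU : IsUnitary U) (w : Site L) :
    plaqOp U w ∈ unitary _ := by
  rw [plaqOp_eq_fiberwiseOp]
  refine fiberwiseOp_mem_unitary ?_ (bijOn_plaqLegs w) ⟨hU.2, hU.1⟩
  exact ⟨fun f => eqOn_refl f _, EqOn.symm, EqOn.trans⟩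

theorem supportedOn_plaqOp (U : Matrix (FourIdx d) (FourIdx d) ℂ) (w : Site L) :
    SupportedOn (plaquette w) (plaqOp U w) := by
  rw [plaqOp_eq_fiberwiseOp]
  refine supportedOn_fiberwiseOp (fun f g h => ?_) U
  simp only [plaqLegs, Prod.mk.injEq]
  exact ⟨h (by simp [plaquette]), h (by simp [plaquette]), h (by simp [plaquette]),
    h (by simp [plaquette])⟩

theorem supportedOn_siteOpG (a : Matrix (Fin d) (Fin d) ℂ) (x : Site L) :
    SupportedOn {x} (siteOpG a x) := by
  rw [siteOpG_eq_fiberwiseOp]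
  exact supportedOn_fiberwiseOp (fun f g h => eqOn_singleton.mp h) a

theorem supportedOn_conj_layer [Nontrivial (ZMod L)] (hL : Even L) (hU : IsUnitary U) (s : ℕ)
    {S : Set (Site L)} {B : Matrix (GlobalIdx d L) (GlobalIdx d L) ℂ} (hB : SupportedOn S B) :
    SupportedOn (torusBall S 1) (((layerAnchors L s).map (plaqOp U)).prod ᴴ * B *
      ((layerAnchors L s).map (plaqOp U)).prod) := by
  refine (hB.conj_list_prod_of_pairwise (fun w _ => supportedOn_plaqOp U w)
    (fun w _ => plaqOp_mem_unitary hU w) fun w hw w' hw' h =>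
      congrArg plaquette (eq_of_mem_layerAnchors_of_not_disjoint hL hw hw' h)).mono ?_
  refine union_subset (subset_torusBall S 1) ?_
  simp only [iUnion_subset_iff]
  intro w _ hwS z hz
  obtain ⟨z₀, hz₀w, hz₀S⟩ := not_disjoint_iff.mp hwS
  exact ⟨z₀, hz₀S, torusDist_le_one_of_mem_plaquette hz₀w hz⟩

theorem supportedOn_conj_Uoo_plaquette_msite [Nontrivial (ZMod L)] (hL : Even L)
    (hU : IsUnitary U) {y : Site L} {B : Matrix (GlobalIdx d L) (GlobalIdx d L) ℂ}
    (hB : SupportedOn (plaquette (msite y)) B) :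
    SupportedOn (plaquette (msite y)) ((Uoo d L U)ᴴ * B * Uoo d L U) := by
  rw [Uoo_eq]
  refine hB.conj_list_prod (fun w _ => supportedOn_plaqOp U w)
    (fun w _ => plaqOp_mem_unitary hU w) fun w hw h => ?_
  rw [eq_of_mem_layerAnchors_of_not_disjoint hL hw (msite_mem_layerAnchors hL y) h]

theorem conjTranspose_Ustep_mul_mul (B : Matrix (GlobalIdx d L) (GlobalIdx d L) ℂ) :
    (Ustep d L U)ᴴ * B * Ustep d L U =
      (Uee d L U)ᴴ * ((Uoo d L U)ᴴ * B * Uoo d L U) * Uee d L U := by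
  simp only [Ustep, Matrix.conjTranspose_mul, Matrix.mul_assoc]

theorem supportedOn_conj_Ustep [Nontrivial (ZMod L)] (hL : Even L) (hU : IsUnitary U)
    {S : Set (Site L)} {B : Matrix (GlobalIdx d L) (GlobalIdx d L) ℂ} (hB : SupportedOn S B) :
    SupportedOn (torusBall S 2) ((Ustep d L U)ᴴ * B * Ustep d L U) := by
  rw [conjTranspose_Ustep_mul_mul, Uee_eq, Uoo_eq]
  exact (supportedOn_conj_layer hL hU 0 (supportedOn_conj_layer hL hU 1 hB)).mono
    (torusBall_torusBall_subset S 1 1)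

theorem supportedOn_conj_Ustep_pow_siteOpG [Nontrivial (ZMod L)] (hL : Even L)
    (hU : IsUnitary U) (y : Site L) (b : Matrix (Fin d) (Fin d) ℂ) (t : ℕ) :
    SupportedOn (torusBall (plaquette (msite y)) (2 * t - 1))
      ((Ustep d L U)ᴴ ^ t * siteOpG b y * Ustep d L U ^ t) := by
  have hb : SupportedOn (plaquette (msite y)) (siteOpG b y) :=
    (supportedOn_siteOpG b y).mono (singleton_subset_iff.mpr (mem_plaquette_msite y))
  induction t with
  | zero => simpa using hb.mono (subset_torusBall _ 0)
  | succ t ih =>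
    rw [pow_succ', pow_succ, show ∀ A B C D E : Matrix (GlobalIdx d L) (GlobalIdx d L) ℂ,
      A * B * C * (D * E) = A * (B * C * D) * E by simp [Matrix.mul_assoc]]
    rcases t with _ | t
    · simp only [pow_zero, Matrix.mul_one, Matrix.one_mul]
      rw [conjTranspose_Ustep_mul_mul, Uee_eq]
      exact supportedOn_conj_layer hL hU 0 (supportedOn_conj_Uoo_plaquette_msite hL hU hb)
    · rw [show 2 * (t + 1 + 1) - 1 = 2 * (t + 1) - 1 + 2 by omega]
      exact (supportedOn_conj_Ustep hL hU ih).mono (torusBall_torusBall_subset _ _ _)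

theorem Ustep_mem_unitary [Nontrivial (ZMod L)] (hU : IsUnitary U) :
    Ustep d L U ∈ unitary _ := by
  have hlayer (s : ℕ) : ((layerAnchors L s).map (plaqOp U)).prod ∈ unitary _ :=
    Submonoid.list_prod_mem _ fun _ hG => by
      obtain ⟨w, _, rfl⟩ := List.mem_map.mp hG
      exact plaqOp_mem_unitary hU w
  rw [Ustep, Uoo_eq, Uee_eq]
  exact mul_mem (hlayer 1) (hlayer 0)

end Dynamics

section Traces

variable {d L : ℕ} [NeZero L]

theorem card_mul_trace_siteOpG_mul {T : Set (Site L)}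
    {C : Matrix (GlobalIdx d L) (GlobalIdx d L) ℂ} (hC : SupportedOn T C) {x : Site L}
    (hx : x ∉ T) (a : Matrix (Fin d) (Fin d) ℂ) :
    (d : ℂ) * (siteOpG a x * C).trace = a.trace * C.trace := by
  have hdiag (f : GlobalIdx d L) : (siteOpG a x * C) f f = a (f x) (f x) * C f f := by
    rw [(supportedOn_siteOpG a x).mul_apply_of_disjoint (disjoint_singleton_left.mpr hx) hC
      (eqOn_refl f _) (eqOn_refl f _)]
    simp [siteOpG]
  have hCx (f : GlobalIdx d L) (v : Fin d) : C (update f x v) (update f x v) = C f f :=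
    hC.2 _ _ _ _ (eqOn_refl _ _) (eqOn_refl _ _)
      (fun u hu => update_of_ne (ne_of_mem_of_not_mem hu hx) _ _)
      (fun u hu => update_of_ne (ne_of_mem_of_not_mem hu hx) _ _)
  simpa [Matrix.trace, hdiag] using
    card_mul_sum_apply_mul_eq_sum_mul_sum x (fun v => a v v) (fun f => C f f) hCx

theorem card_mul_trace_siteOpG (b : Matrix (Fin d) (Fin d) ℂ) (y : Site L) :
    (d : ℂ) * (siteOpG b y).trace = b.trace * d ^ (L ^ 2) := by
  simpa [Matrix.trace_one, sq] using
    card_mul_trace_siteOpG_mul (supportedOn_one ∅) (notMem_empty y) b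

end Traces

theorem dynamic_correlation_outside_lightcone_general (d L t : ℕ) [NeZero L]
    (hd : 1 ≤ d) (hL : Even L) (hL2 : 2 ≤ L)
    (U : Matrix (FourIdx d) (FourIdx d) ℂ) (hU : IsUnitary U)
    (x y : Site L) (hx : x ∉ LCfin y t) :
    ∀ a b : Matrix (Fin d) (Fin d) ℂ,
      (1 / (d : ℂ) ^ (L ^ 2)) *
        (siteOpG a x * (Ustep d L U)ᴴ ^ t * siteOpG b y * (Ustep d L U) ^ t).trace =
      (1 / (d : ℂ) ^ 2) * a.trace * b.trace := by
  intro a b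
  have : Nontrivial (ZMod L) := ZMod.nontrivial_iff.mpr (by omega)
  have hC := supportedOn_conj_Ustep_pow_siteOpG hL hU y b t
  rw [← coe_LCfin, ← Matrix.conjTranspose_pow] at hC
  have hxC := card_mul_trace_siteOpG_mul hC (Finset.mem_coe.not.mpr hx) a
  rw [trace_conjTranspose_mul_mul_of_mem_unitary (pow_mem (Ustep_mem_unitary hU) t)] at hxC
  have hd0 : (d : ℂ) ≠ 0 := by exact_mod_cast (by omega : d ≠ 0)
  rw [← Matrix.conjTranspose_pow, Matrix.mul_assoc (siteOpG a x) _ (siteOpG b y),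
    Matrix.mul_assoc (siteOpG a x)]
  field_simp
  linear_combination (d : ℂ) * hxC + a.trace * card_mul_trace_siteOpG b y

/-- If `x` lies outside the light-cone base of `y`, the infinite-temperature dynamic
correlation factorizes into the product of the normalized traces. -/
theorem dynamic_correlation_outside_lightcone (d L t : ℕ) [NeZero L]
    (hd : 1 ≤ d) (hL : Even L) (hL2 : 2 ≤ L) (ht : 1 ≤ t)
    (U : Matrix (FourIdx d) (FourIdx d) ℂ) (hU : IsUnitary U)
    (x y : Site L) (hx : x ∉ LCfin y t) :
    ∀ a b : Matrix (Fin d) (Fin d) ℂ,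
      (1 / (d : ℂ) ^ (L ^ 2)) *
        (siteOpG a x * (Ustep d L U)ᴴ ^ t * siteOpG b y * (Ustep d L U) ^ t).trace =
      (1 / (d : ℂ) ^ 2) * a.trace * b.trace :=
  dynamic_correlation_outside_lightcone_general d L t hd hL hL2 U hU x y hx
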